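/- Let d ≥ 2, 1 ≤ r ≤ d, and ρ_r = (1/r) Σ_{l=1}^r E_{ll}. Then for any k ∈ {1,…,d}: (i) for every index i with 1 ≤ i ≤ r, the diagonal-entry variance of the A block of the covariant-measurement least squares estimator satisfies d · ∫_{U(d)} ⟨e_k, U*ρ_r U e_k⟩ · ((d+1)|U_{ik}|² − 1 − 1/r)² dU = 2·((r+2)/r)·((d+1)/(d+2)) − (1 + 1/r)²; and (ii) if r ≥ 2, for all distinct indices i ≠ j with 1 ≤ i, j ≤ r, the corresponding covariance satisfies d · ∫_{U(d)} ⟨e_k, U*ρ_r U e_k⟩ · ((d+1)|U_{ik}|² − 1 − 1/r)((d+1)|U_{jk}|² − 1 − 1/r) dU = ((r+2)/r)·((d+1)/(d+2)) − (1 + 1/r)². -/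

import Mathlib

open MeasureTheory ProbabilityTheory Matrix
open scoped ComplexOrder

/-- The Borel (= product) σ-algebra on `d × d` complex matrices. -/
noncomputable instance matrixMeasurableSpace (d : ℕ) : MeasurableSpace (Matrix (Fin d) (Fin d) ℂ) :=
  MeasurableSpace.pi

/-- A density matrix: positive semidefinite with trace one. -/
def IsDensityMatrix {d : ℕ} (ρ : Matrix (Fin d) (Fin d) ℂ) : Prop :=
  ρ.PosSemidef ∧ ρ.trace = 1

/-- The rank-one projection `U E_{jj} U*`. -/
noncomputable def covProj (d : ℕ) (j : Fin d) (U : Matrix.unitaryGroup (Fin d) ℂ) :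
    Matrix (Fin d) (Fin d) ℂ :=
  (U : Matrix (Fin d) (Fin d) ℂ) * Matrix.single j j 1 *
    star (U : Matrix (Fin d) (Fin d) ℂ)

/-- The outcome law `μ_ρ` of the covariant measurement on the state `ρ`, built from the Haar
probability measure `μ` on the unitary group: the distribution of `U E_{JJ} U*` where `U ~ μ`
and, conditionally on `U`, `J = j` has probability `⟨e_j, U* ρ U e_j⟩`. -/
noncomputable def covariantLaw (d : ℕ) (μ : Measure (Matrix.unitaryGroup (Fin d) ℂ))
    (ρ : Matrix (Fin d) (Fin d) ℂ) : Measure (Matrix (Fin d) (Fin d) ℂ) :=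
  Measure.sum fun j : Fin d =>
    Measure.map (covProj d j)
      (μ.withDensity fun U =>
        ENNReal.ofReal
          ((star (U : Matrix (Fin d) (Fin d) ℂ) * ρ * (U : Matrix (Fin d) (Fin d) ℂ)) j j).re)

/-- The least squares estimator `ρ̂_LS = (1/N) Σ_i ((d+1) P_i - I)`. -/
noncomputable def lsEst {Ω : Type*} (d N : ℕ) (P : Fin N → Ω → Matrix (Fin d) (Fin d) ℂ)
    (ω : Ω) : Matrix (Fin d) (Fin d) ℂ :=
  (N : ℂ)⁻¹ • ∑ i, ((d + 1 : ℂ) • P i ω - 1)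

/-- Squared Frobenius norm `‖A‖₂² = Tr(A* A)`. -/
noncomputable def frobSq {d : ℕ} (A : Matrix (Fin d) (Fin d) ℂ) : ℝ :=
  (Matrix.trace (Aᴴ * A)).re

/-- Frobenius norm `‖A‖₂ = (Tr(A* A))^{1/2}`. -/
noncomputable def frobNorm {d : ℕ} (A : Matrix (Fin d) (Fin d) ℂ) : ℝ :=
  Real.sqrt (Matrix.trace (Aᴴ * A)).re

/-- Operator norm (largest singular value) of a matrix, as the `ℓ² → ℓ²` operator norm. -/
noncomputable def opNorm {d : ℕ} (A : Matrix (Fin d) (Fin d) ℂ) : ℝ :=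
  ‖LinearMap.toContinuousLinearMap (Matrix.toEuclideanLin A)‖

/-- Trace norm `‖A‖₁ = Tr|A|`: the sum of the singular values of `A`. -/
noncomputable def traceNorm {d : ℕ} (A : Matrix (Fin d) (Fin d) ℂ) : ℝ :=
  ∑ i, Real.sqrt ((Matrix.posSemidef_conjTranspose_mul_self A).1.eigenvalues i)

/-- The rank-`r` density matrix `ρ_r = (1/r) Σ_{i=1}^r E_{ii}`. -/
noncomputable def rhoR (d r : ℕ) : Matrix (Fin d) (Fin d) ℂ :=
  (r : ℂ)⁻¹ • ∑ i : Fin d, if (i : ℕ) < r then Matrix.single i i 1 else 0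

/-!
Write `x_a = |U_{ak}|²`. The weight `⟨e_k, U* ρ_r U e_k⟩` equals `(1/r) Σ_{l<r} x_l`, so both
integrals are combinations of moments of order at most three of the vector `x`, which satisfies
`Σ_a x_a = 1`. Left invariance lets us replace `U` by `V U` for any fixed unitary `V`:
permutation matrices make the moments symmetric in the indices, multiplying `e_b` by `i` shows
that the interference term `Re (U_{ak} conj U_{bk})` has mean zero against functions of `x` and
mean square `x_a x_b / 2`, and the rotation by `π/4` in the `(a, b)`-plane then gives
`E[x_a² g] = 2 E[x_a x_b g]` whenever `g` depends on `x` only through `x_a + x_b` and the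
coordinates off `{a, b}`. With `Σ_a x_a = 1` this yields `E[x_a] = 1/d`,
`E[x_a x_b] = 1/(d(d+1))`, `E[x_a²] = 2/(d(d+1))`, and third moments `6`, `2`, `1` over
`d(d+1)(d+2)` for the index patterns `aaa`, `aab`, `abc`.
-/

open ComplexConjugate

section

variable {d : ℕ}

instance : BorelSpace (Matrix (Fin d) (Fin d) ℂ) :=
  inferInstanceAs (BorelSpace (Fin d → Fin d → ℂ))

instance : CompactSpace (unitaryGroup (Fin d) ℂ) :=
  isCompact_iff_compactSpace.mp <| (isCompact_univ_pi fun _ =>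
    isCompact_univ_pi fun _ => isCompact_closedBall (0 : ℂ) 1).of_isClosed_subset
    (isClosed_unitary (R := Matrix (Fin d) (Fin d) ℂ)) fun U hU a _ b _ => by
      simpa using entry_norm_bound_of_unitary hU a b

@[fun_prop]
theorem Matrix.UnitaryGroup.continuous_apply (a b : Fin d) :
    Continuous fun U : unitaryGroup (Fin d) ℂ => (U : Matrix (Fin d) (Fin d) ℂ) a b :=
  continuous_subtype_val.matrix_elem a b

noncomputable def permUnitary (σ : Equiv.Perm (Fin d)) : unitaryGroup (Fin d) ℂ :=
  ⟨σ.permMatrix ℂ, by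
    rw [mem_unitaryGroup_iff, star_eq_conjTranspose, conjTranspose_permMatrix, ← permMatrix_mul,
      inv_mul_cancel, permMatrix_one]⟩

theorem permUnitary_mul_apply (σ : Equiv.Perm (Fin d)) (U : unitaryGroup (Fin d) ℂ)
    (a b : Fin d) :
    ((permUnitary σ * U : unitaryGroup (Fin d) ℂ) : Matrix (Fin d) (Fin d) ℂ) a b
      = (U : Matrix (Fin d) (Fin d) ℂ) (σ a) b := by
  simp [permUnitary, PEquiv.toMatrix_toPEquiv_mul]

noncomputable def phaseIUnitary (b : Fin d) : unitaryGroup (Fin d) ℂ :=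
  ⟨diagonal (Function.update 1 b Complex.I), by
    rw [mem_unitaryGroup_iff, star_eq_conjTranspose, diagonal_conjTranspose, diagonal_mul_diagonal,
      ← diagonal_one]
    congr 1
    ext l
    rcases eq_or_ne l b with rfl | hl <;> simp [*]⟩

theorem phaseIUnitary_mul_apply_self (b : Fin d) (U : unitaryGroup (Fin d) ℂ) (l : Fin d) :
    ((phaseIUnitary b * U : unitaryGroup (Fin d) ℂ) : Matrix (Fin d) (Fin d) ℂ) b l
      = Complex.I * (U : Matrix (Fin d) (Fin d) ℂ) b l := by
  simp [phaseIUnitary, diagonal_mul]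

theorem phaseIUnitary_mul_apply_of_ne {a b : Fin d} (hab : a ≠ b) (U : unitaryGroup (Fin d) ℂ)
    (l : Fin d) :
    ((phaseIUnitary b * U : unitaryGroup (Fin d) ℂ) : Matrix (Fin d) (Fin d) ℂ) a l
      = (U : Matrix (Fin d) (Fin d) ℂ) a l := by
  simp [phaseIUnitary, diagonal_mul, hab]

/-- On the coordinates `a, b` this acts as the rotation `[[c, c], [-c, c]]`, `c = 1/√2`. -/
noncomputable def planeRotation {a b : Fin d} (hab : a ≠ b) : unitaryGroup (Fin d) ℂ :=
  ⟨1 + ((√2 : ℂ)⁻¹ - 1) • (single a a 1 + single b b 1)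
      + (√2 : ℂ)⁻¹ • (single a b 1 - single b a 1), by
    have hc : (√2 : ℂ)⁻¹ * (√2 : ℂ)⁻¹ = 1 / 2 := by
      rw [← mul_inv, ← Complex.ofReal_mul, Real.mul_self_sqrt zero_le_two]; norm_num
    have hstar : star (√2 : ℂ)⁻¹ = (√2 : ℂ)⁻¹ := by simp [Complex.conj_ofReal]
    rw [mem_unitaryGroup_iff]
    simp only [star_add, star_smul, star_sub, star_one, star_eq_conjTranspose, conjTranspose_single,
      hstar, add_mul, mul_add, sub_mul, mul_sub, smul_mul_smul, one_mul, mul_one,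
      single_mul_single_same, single_mul_single_of_ne, ne_eq, hab, Ne.symm hab, not_false_eq_true,
      add_zero, zero_add, sub_zero, zero_sub]
    linear_combination (norm := module)
      (2 : ℂ) • hc • (single a a 1 + single b b 1 : Matrix (Fin d) (Fin d) ℂ)⟩

section planeRotation
variable {a b : Fin d} (hab : a ≠ b) (U : unitaryGroup (Fin d) ℂ) (k : Fin d)
include hab

theorem planeRotation_mul_apply_left :
    ((planeRotation hab * U : unitaryGroup (Fin d) ℂ) : Matrix (Fin d) (Fin d) ℂ) a k
      = (√2 : ℂ)⁻¹ *
        ((U : Matrix (Fin d) (Fin d) ℂ) a k + (U : Matrix (Fin d) (Fin d) ℂ) b k) := by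
  simp only [planeRotation, smul_add, smul_single, smul_eq_mul, mul_one, Submonoid.coe_mul,
    add_mul, one_mul, Algebra.smul_mul_assoc, sub_mul, Matrix.add_apply, single_mul_apply_same,
    ne_eq, hab, not_false_eq_true, single_mul_apply_of_ne, add_zero, add_sub_cancel,
    Matrix.smul_apply, Matrix.sub_apply, sub_zero]
  ring

theorem planeRotation_mul_apply_right :
    ((planeRotation hab * U : unitaryGroup (Fin d) ℂ) : Matrix (Fin d) (Fin d) ℂ) b k
      = (√2 : ℂ)⁻¹ *
        ((U : Matrix (Fin d) (Fin d) ℂ) b k - (U : Matrix (Fin d) (Fin d) ℂ) a k) := by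
  simp only [planeRotation, smul_add, smul_single, smul_eq_mul, mul_one, Submonoid.coe_mul,
    add_mul, one_mul, Algebra.smul_mul_assoc, sub_mul, Matrix.add_apply, ne_eq, Ne.symm hab,
    not_false_eq_true, single_mul_apply_of_ne, single_mul_apply_same, zero_add, add_sub_cancel,
    Matrix.smul_apply, Matrix.sub_apply, zero_sub, mul_neg]
  ring

theorem planeRotation_mul_apply_of_ne {l : Fin d} (hla : l ≠ a) (hlb : l ≠ b) :
    ((planeRotation hab * U : unitaryGroup (Fin d) ℂ) : Matrix (Fin d) (Fin d) ℂ) l k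
      = (U : Matrix (Fin d) (Fin d) ℂ) l k := by
  simp [planeRotation, add_mul, sub_mul, hla, hlb]

end planeRotation

noncomputable def colNormSq (k : Fin d) (U : unitaryGroup (Fin d) ℂ) (a : Fin d) : ℝ :=
  ‖(U : Matrix (Fin d) (Fin d) ℂ) a k‖ ^ 2

noncomputable def colCross (k : Fin d) (U : unitaryGroup (Fin d) ℂ) (a b : Fin d) : ℂ :=
  (U : Matrix (Fin d) (Fin d) ℂ) a k * conj ((U : Matrix (Fin d) (Fin d) ℂ) b k)

section colNormSq
variable (k : Fin d)

@[fun_prop]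
theorem continuous_colNormSq : Continuous (colNormSq k) := by
  unfold colNormSq; fun_prop

@[fun_prop]
theorem continuous_colCross (a b : Fin d) : Continuous fun U => colCross k U a b := by
  unfold colCross; fun_prop

theorem sum_colNormSq (U : unitaryGroup (Fin d) ℂ) : ∑ a, colNormSq k U a = 1 := by
  have h := congr_fun₂ (Matrix.UnitaryGroup.star_mul_self U) k k
  simp only [Matrix.mul_apply, Matrix.star_apply, Matrix.one_apply_eq, RCLike.star_def,
    Complex.conj_mul'] at h
  exact_mod_cast h

theorem colNormSq_permUnitary_mul (σ : Equiv.Perm (Fin d)) (U : unitaryGroup (Fin d) ℂ) :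
    colNormSq k (permUnitary σ * U) = colNormSq k U ∘ σ := by
  ext a; simp [colNormSq, permUnitary_mul_apply]

theorem colNormSq_phaseIUnitary_mul (b : Fin d) (U : unitaryGroup (Fin d) ℂ) :
    colNormSq k (phaseIUnitary b * U) = colNormSq k U := by
  ext a
  rcases eq_or_ne a b with rfl | hab
  · simp [colNormSq, phaseIUnitary_mul_apply_self]
  · simp [colNormSq, phaseIUnitary_mul_apply_of_ne hab]

theorem colCross_phaseIUnitary_mul {a b : Fin d} (hab : a ≠ b) (U : unitaryGroup (Fin d) ℂ) :
    colCross k (phaseIUnitary b * U) a b = -Complex.I * colCross k U a b := by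
  simp only [colCross, phaseIUnitary_mul_apply_of_ne hab, phaseIUnitary_mul_apply_self, map_mul,
    Complex.conj_I, neg_mul, mul_neg, neg_inj]
  ring

theorem re_sq_add_im_sq_colCross (U : unitaryGroup (Fin d) ℂ) (a b : Fin d) :
    (colCross k U a b).re ^ 2 + (colCross k U a b).im ^ 2
      = colNormSq k U a * colNormSq k U b := by
  rw [sq, sq, ← Complex.normSq_apply]
  simp [colCross, colNormSq, Complex.sq_norm]

section planeRotation
variable {a b : Fin d} (hab : a ≠ b) (U : unitaryGroup (Fin d) ℂ)
include hab

theorem colNormSq_planeRotation_mul_left :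
    colNormSq k (planeRotation hab * U) a
      = (colNormSq k U a + colNormSq k U b) / 2 + (colCross k U a b).re := by
  simp only [colNormSq, colCross, planeRotation_mul_apply_left, Complex.sq_norm,
    Complex.normSq_mul, Complex.normSq_add, Complex.normSq_inv, Complex.normSq_ofReal,
    Real.mul_self_sqrt zero_le_two]
  ring

theorem colNormSq_planeRotation_mul_right :
    colNormSq k (planeRotation hab * U) b
      = (colNormSq k U a + colNormSq k U b) / 2 - (colCross k U a b).re := by
  simp only [colNormSq, colCross, planeRotation_mul_apply_right, Complex.sq_norm,
    Complex.normSq_mul, Complex.normSq_sub, Complex.normSq_inv, Complex.normSq_ofReal,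
    Real.mul_self_sqrt zero_le_two, Complex.mul_re, Complex.conj_re, Complex.conj_im]
  ring

theorem colNormSq_planeRotation_mul_of_ne {l : Fin d} (hla : l ≠ a) (hlb : l ≠ b) :
    colNormSq k (planeRotation hab * U) l = colNormSq k U l := by
  simp only [colNormSq, planeRotation_mul_apply_of_ne hab U k hla hlb]

end planeRotation
end colNormSq

theorem sum_eq_sum_add_card_sdiff_mul {ι R : Type*} [DecidableEq ι] [CommRing R]
    {T S : Finset ι} (hST : S ⊆ T) {f : ι → R} {C : R}
    (hf : ∀ l ∈ T, l ∉ S → f l = C) :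
    ∑ l ∈ T, f l = ∑ l ∈ S, f l + ((T.card : R) - S.card) * C := by
  rw [← Finset.sum_sdiff hST, Finset.sum_congr rfl fun l hl => hf l (Finset.mem_sdiff.1 hl).1
    (Finset.mem_sdiff.1 hl).2, Finset.sum_const, Finset.card_sdiff_of_subset hST, nsmul_eq_mul,
    Nat.cast_sub (Finset.card_le_card hST)]
  ring

theorem sum_univ_eq_add_mul {R : Type*} [CommRing R] {f : Fin d → R} {C : R} (a : Fin d)
    (hf : ∀ c ≠ a, f c = C) : ∑ c, f c = f a + ((d : R) - 1) * C := by
  simpa using sum_eq_sum_add_card_sdiff_mul (Finset.subset_univ {a}) fun c _ hc =>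
    hf c (Finset.notMem_singleton.1 hc)

theorem Continuous.integrable_of_compactSpace {X E : Type*} [TopologicalSpace X]
    [CompactSpace X] [MeasurableSpace X] [OpensMeasurableSpace X] [NormedAddCommGroup E]
    (μ : Measure X) [IsFiniteMeasure μ] {f : X → E} (hf : Continuous f) : Integrable f μ :=
  hf.integrable_of_hasCompactSupport (.of_compactSpace f)

section Moments
variable (μ : Measure (unitaryGroup (Fin d) ℂ)) [IsProbabilityMeasure μ] [μ.IsMulLeftInvariant]
  (k : Fin d)

omit [IsProbabilityMeasure μ] in
theorem integral_comp_colNormSq_perm (σ : Equiv.Perm (Fin d)) (F : (Fin d → ℝ) → ℝ) :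
    ∫ U, F (colNormSq k U ∘ σ) ∂μ = ∫ U, F (colNormSq k U) ∂μ := by
  simp only [← colNormSq_permUnitary_mul, integral_mul_left_eq_self (fun U => F (colNormSq k U))]

omit [IsProbabilityMeasure μ] in
theorem integral_re_colCross_mul_eq_zero {a b : Fin d} (hab : a ≠ b)
    (H : (Fin d → ℝ) → ℝ) :
    ∫ U, (colCross k U a b).re * H (colNormSq k U) ∂μ = 0 := by
  -- Multiplying `e_b` by `i` maps `(Re, Im)` of `colCross` to `(Im, -Re)`.
  have hturn (f : ℂ → ℝ) : ∫ U, f (colCross k U a b) * H (colNormSq k U) ∂μ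
      = ∫ U, f (-Complex.I * colCross k U a b) * H (colNormSq k U) ∂μ := by
    conv_lhs => rw [← integral_mul_left_eq_self _ (phaseIUnitary b)]
    simp only [colCross_phaseIUnitary_mul k hab, colNormSq_phaseIUnitary_mul]
  have h1 := hturn Complex.re
  have h2 := hturn Complex.im
  simp only [neg_mul, Complex.neg_re, Complex.neg_im, Complex.mul_re, Complex.mul_im, Complex.I_re,
    Complex.I_im, zero_mul, one_mul, zero_sub, zero_add, neg_neg, integral_neg] at h1 h2
  linarith

theorem integral_re_colCross_sq_mul {a b : Fin d} (hab : a ≠ b) {H : (Fin d → ℝ) → ℝ}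
    (hH : Continuous H) :
    ∫ U, (colCross k U a b).re ^ 2 * H (colNormSq k U) ∂μ
      = (∫ U, colNormSq k U a * colNormSq k U b * H (colNormSq k U) ∂μ) / 2 := by
  have hturn : ∫ U, (colCross k U a b).re ^ 2 * H (colNormSq k U) ∂μ
      = ∫ U, (colCross k U a b).im ^ 2 * H (colNormSq k U) ∂μ := by
    conv_lhs => rw [← integral_mul_left_eq_self _ (phaseIUnitary b)]
    simp [colCross_phaseIUnitary_mul k hab, colNormSq_phaseIUnitary_mul]
  simp only [← re_sq_add_im_sq_colCross, add_mul]
  rw [integral_add (Continuous.integrable_of_compactSpace μ (by fun_prop))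
    (Continuous.integrable_of_compactSpace μ (by fun_prop)), ← hturn]
  ring

theorem integral_colNormSq_sq_mul_eq_two_mul {a b : Fin d} (hab : a ≠ b)
    {G : (Fin d → ℝ) → ℝ} (hG : Continuous G)
    (hGab : ∀ x y : Fin d → ℝ, (∀ l, l ≠ a → l ≠ b → x l = y l) →
      x a + x b = y a + y b → G x = G y) :
    ∫ U, colNormSq k U a ^ 2 * G (colNormSq k U) ∂μ
      = 2 * ∫ U, colNormSq k U a * colNormSq k U b * G (colNormSq k U) ∂μ := by
  have hGrot (U : unitaryGroup (Fin d) ℂ) :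
      G (colNormSq k (planeRotation hab * U)) = G (colNormSq k U) :=
    hGab _ _ (fun l hla hlb => colNormSq_planeRotation_mul_of_ne k hab U hla hlb)
      (by rw [colNormSq_planeRotation_mul_left, colNormSq_planeRotation_mul_right]; ring)
  have hswap : ∫ U, colNormSq k U b ^ 2 * G (colNormSq k U) ∂μ
      = ∫ U, colNormSq k U a ^ 2 * G (colNormSq k U) ∂μ := by
    rw [← integral_comp_colNormSq_perm μ k (Equiv.swap a b) fun x => x a ^ 2 * G x]
    congr with U
    rw [Function.comp_apply, Equiv.swap_apply_left]
    congr 1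
    refine hGab _ _ (fun l hla hlb => ?_) ?_
    · simp [Equiv.swap_apply_of_ne_of_ne hla hlb]
    · simp [add_comm]
  have hrot : ∫ U, colNormSq k U a ^ 2 * G (colNormSq k U) ∂μ
      = ∫ U, ((colNormSq k U a ^ 2 * G (colNormSq k U)
            + colNormSq k U b ^ 2 * G (colNormSq k U)) / 4
          + colNormSq k U a * colNormSq k U b * G (colNormSq k U) / 2
          + (colCross k U a b).re * ((colNormSq k U a + colNormSq k U b) * G (colNormSq k U))
          + (colCross k U a b).re ^ 2 * G (colNormSq k U)) ∂μ := by
    conv_lhs => rw [← integral_mul_left_eq_self _ (planeRotation hab)]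
    congr with U
    rw [colNormSq_planeRotation_mul_left, hGrot]
    ring
  have hcross := integral_re_colCross_mul_eq_zero μ k hab fun x => (x a + x b) * G x
  rw [integral_add, integral_add, integral_add, integral_div, integral_div, integral_add, hswap,
    hcross, integral_re_colCross_sq_mul μ k hab hG] at hrot
  · linarith
  all_goals exact Continuous.integrable_of_compactSpace μ (by fun_prop)

omit [μ.IsMulLeftInvariant] in
theorem sum_integral_mul_colNormSq {f : unitaryGroup (Fin d) ℂ → ℝ} (hf : Continuous f) :
    ∑ c, ∫ U, f U * colNormSq k U c ∂μ = ∫ U, f U ∂μ := by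
  rw [← integral_finsetSum _ fun c _ => Continuous.integrable_of_compactSpace μ (by fun_prop)]
  simp only [← Finset.mul_sum, sum_colNormSq, mul_one]

theorem integral_colNormSq (a : Fin d) : ∫ U, colNormSq k U a ∂μ = 1 / d := by
  have hd : (d : ℝ) ≠ 0 := by exact_mod_cast a.pos.ne'
  have hsum := sum_integral_mul_colNormSq μ k (f := fun _ => 1) continuous_const
  rw [sum_univ_eq_add_mul a (C := ∫ U, colNormSq k U a ∂μ) fun c _ => ?_] at hsum
  · simp only [one_mul, integral_const, probReal_univ, smul_eq_mul, mul_one] at hsum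
    field_simp
    linarith
  · simpa using integral_comp_colNormSq_perm μ k (Equiv.swap a c) (· a)

theorem integral_colNormSq_mul_colNormSq {a b : Fin d} (hab : a ≠ b) :
    ∫ U, colNormSq k U a * colNormSq k U b ∂μ = 1 / (d * (d + 1)) := by
  have hd : (d : ℝ) ≠ 0 := by exact_mod_cast a.pos.ne'
  have hsum := sum_integral_mul_colNormSq μ k (f := (colNormSq k · a)) (by fun_prop)
  have haa := integral_colNormSq_sq_mul_eq_two_mul μ k hab (G := fun _ => 1) continuous_const
    fun _ _ _ _ => rfl
  simp only [mul_one] at haa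
  rw [integral_colNormSq, sum_univ_eq_add_mul a
    (C := ∫ U, colNormSq k U a * colNormSq k U b ∂μ) fun c hca => ?_] at hsum
  · simp only [← sq, haa] at hsum
    field_simp at hsum ⊢
    linear_combination hsum
  · simpa [Equiv.swap_apply_of_ne_of_ne hab hca.symm] using
      integral_comp_colNormSq_perm μ k (Equiv.swap b c) fun x => x a * x b

theorem integral_colNormSq_sq (a : Fin d) :
    ∫ U, colNormSq k U a ^ 2 ∂μ = 2 / (d * (d + 1)) := by
  have hd : (d : ℝ) ≠ 0 := by exact_mod_cast a.pos.ne'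
  have hsum := sum_integral_mul_colNormSq μ k (f := (colNormSq k · a)) (by fun_prop)
  rw [integral_colNormSq, sum_univ_eq_add_mul a (C := 1 / ((d : ℝ) * (d + 1)))
    fun c hca => integral_colNormSq_mul_colNormSq μ k hca.symm] at hsum
  simp only [← sq] at hsum
  field_simp at hsum ⊢
  linear_combination hsum

theorem integral_colNormSq_sq_mul_self_eq_three_mul {a b : Fin d} (hab : a ≠ b) :
    ∫ U, colNormSq k U a ^ 2 * colNormSq k U a ∂μ
      = 3 * ∫ U, colNormSq k U a ^ 2 * colNormSq k U b ∂μ := by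
  have h := integral_colNormSq_sq_mul_eq_two_mul μ k hab (G := fun x => x a + x b) (by fun_prop)
    fun _ _ _ h => h
  have hswap : ∫ U, colNormSq k U a * colNormSq k U b * colNormSq k U b ∂μ
      = ∫ U, colNormSq k U a ^ 2 * colNormSq k U b ∂μ := by
    rw [← integral_comp_colNormSq_perm μ k (Equiv.swap a b) fun x => x a ^ 2 * x b]
    congr with U
    simp only [Function.comp_apply, Equiv.swap_apply_left, Equiv.swap_apply_right]
    ring
  have haba : ∫ U, colNormSq k U a * colNormSq k U b * colNormSq k U a ∂μ
      = ∫ U, colNormSq k U a ^ 2 * colNormSq k U b ∂μ := by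
    congr with U
    ring
  simp only [mul_add] at h
  rw [integral_add, integral_add, haba, hswap] at h
  · linarith
  all_goals exact Continuous.integrable_of_compactSpace μ (by fun_prop)

theorem integral_colNormSq_sq_mul_colNormSq {a b : Fin d} (hab : a ≠ b) :
    ∫ U, colNormSq k U a ^ 2 * colNormSq k U b ∂μ = 2 / (d * (d + 1) * (d + 2)) := by
  have hd : (d : ℝ) ≠ 0 := by exact_mod_cast a.pos.ne'
  have hsum := sum_integral_mul_colNormSq μ k (f := (colNormSq k · a ^ 2)) (by fun_prop)
  rw [integral_colNormSq_sq, sum_univ_eq_add_mul a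
    (C := ∫ U, colNormSq k U a ^ 2 * colNormSq k U b ∂μ) fun c hca => ?_,
    integral_colNormSq_sq_mul_self_eq_three_mul μ k hab] at hsum
  · field_simp at hsum ⊢
    linear_combination hsum
  · simpa [Equiv.swap_apply_of_ne_of_ne hab hca.symm] using
      integral_comp_colNormSq_perm μ k (Equiv.swap b c) fun x => x a ^ 2 * x b

theorem integral_colNormSq_pow_three (a : Fin d) :
    ∫ U, colNormSq k U a ^ 3 ∂μ = 6 / (d * (d + 1) * (d + 2)) := by
  have hd : (d : ℝ) ≠ 0 := by exact_mod_cast a.pos.ne'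
  have hsum := sum_integral_mul_colNormSq μ k (f := (colNormSq k · a ^ 2)) (by fun_prop)
  rw [integral_colNormSq_sq, sum_univ_eq_add_mul a (C := 2 / ((d : ℝ) * (d + 1) * (d + 2)))
    fun c hca => integral_colNormSq_sq_mul_colNormSq μ k hca.symm] at hsum
  simp only [← pow_succ] at hsum
  field_simp at hsum ⊢
  linear_combination hsum

theorem integral_colNormSq_mul_mul {a b c : Fin d} (hab : a ≠ b) (hac : a ≠ c) (hbc : b ≠ c) :
    ∫ U, colNormSq k U a * colNormSq k U b * colNormSq k U c ∂μ
      = 1 / (d * (d + 1) * (d + 2)) := by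
  have h := integral_colNormSq_sq_mul_eq_two_mul μ k hab (G := (· c)) (continuous_apply c)
    fun _ _ h _ => h c hac.symm hbc.symm
  rw [integral_colNormSq_sq_mul_colNormSq μ k hac] at h
  linear_combination -h / 2

end Moments

section WeightedMoments
variable (μ : Measure (unitaryGroup (Fin d) ℂ)) [IsProbabilityMeasure μ] [μ.IsMulLeftInvariant]
  (k : Fin d) {T : Finset (Fin d)}

omit [μ.IsMulLeftInvariant] in
theorem integral_sum_colNormSq_mul (T : Finset (Fin d)) {f : unitaryGroup (Fin d) ℂ → ℝ}
    (hf : Continuous f) :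
    ∫ U, (∑ l ∈ T, colNormSq k U l) * f U ∂μ
      = ∑ l ∈ T, ∫ U, f U * colNormSq k U l ∂μ := by
  simp only [Finset.sum_mul, mul_comm (colNormSq k _ _) (f _)]
  rw [integral_finsetSum]
  exact fun l _ => Continuous.integrable_of_compactSpace μ (by fun_prop)

theorem integral_sum_colNormSq (T : Finset (Fin d)) :
    ∫ U, ∑ l ∈ T, colNormSq k U l ∂μ = T.card / d := by
  rw [integral_finsetSum _ fun l _ => Continuous.integrable_of_compactSpace μ (by fun_prop)]
  simp [integral_colNormSq, div_eq_mul_inv]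

theorem integral_sum_colNormSq_mul_colNormSq {i : Fin d} (hi : i ∈ T) :
    ∫ U, (∑ l ∈ T, colNormSq k U l) * colNormSq k U i ∂μ
      = (T.card + 1) / (d * (d + 1)) := by
  have hd : (d : ℝ) ≠ 0 := by exact_mod_cast i.pos.ne'
  rw [integral_sum_colNormSq_mul μ k T (by fun_prop), sum_eq_sum_add_card_sdiff_mul
    (Finset.singleton_subset_iff.2 hi) (C := 1 / ((d : ℝ) * (d + 1)))
    fun l _ hl => integral_colNormSq_mul_colNormSq μ k (Finset.notMem_singleton.1 hl).symm]
  simp only [Finset.sum_singleton, ← sq, integral_colNormSq_sq, Finset.card_singleton,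
    Nat.cast_one]
  field_simp
  ring

theorem integral_sum_colNormSq_mul_sq {i : Fin d} (hi : i ∈ T) :
    ∫ U, (∑ l ∈ T, colNormSq k U l) * colNormSq k U i ^ 2 ∂μ
      = 2 * (T.card + 2) / (d * (d + 1) * (d + 2)) := by
  have hd : (d : ℝ) ≠ 0 := by exact_mod_cast i.pos.ne'
  rw [integral_sum_colNormSq_mul μ k T (by fun_prop), sum_eq_sum_add_card_sdiff_mul
    (Finset.singleton_subset_iff.2 hi) (C := 2 / ((d : ℝ) * (d + 1) * (d + 2)))
    fun l _ hl => integral_colNormSq_sq_mul_colNormSq μ k (Finset.notMem_singleton.1 hl).symm]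
  simp only [Finset.sum_singleton, ← pow_succ, integral_colNormSq_pow_three,
    Finset.card_singleton, Nat.cast_one]
  field_simp
  ring

theorem integral_sum_colNormSq_mul_mul {i j : Fin d} (hij : i ≠ j) (hi : i ∈ T) (hj : j ∈ T) :
    ∫ U, (∑ l ∈ T, colNormSq k U l) * (colNormSq k U i * colNormSq k U j) ∂μ
      = (T.card + 2) / (d * (d + 1) * (d + 2)) := by
  have hd : (d : ℝ) ≠ 0 := by exact_mod_cast i.pos.ne'
  have hiji : ∫ U, colNormSq k U i * colNormSq k U j * colNormSq k U i ∂μ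
      = ∫ U, colNormSq k U i ^ 2 * colNormSq k U j ∂μ := by
    congr with U; ring
  have hijj : ∫ U, colNormSq k U i * colNormSq k U j * colNormSq k U j ∂μ
      = ∫ U, colNormSq k U j ^ 2 * colNormSq k U i ∂μ := by
    congr with U; ring
  have hothers (l : Fin d) (hl : l ∉ ({i, j} : Finset (Fin d))) :
      ∫ U, colNormSq k U i * colNormSq k U j * colNormSq k U l ∂μ
        = 1 / ((d : ℝ) * (d + 1) * (d + 2)) := by
    obtain ⟨hli, hlj⟩ : l ≠ i ∧ l ≠ j := by simpa using hl
    exact integral_colNormSq_mul_mul μ k hij hli.symm hlj.symm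
  rw [integral_sum_colNormSq_mul μ k T (by fun_prop), sum_eq_sum_add_card_sdiff_mul
    (Finset.insert_subset hi (Finset.singleton_subset_iff.2 hj)) fun l _ hl => hothers l hl,
    Finset.sum_pair hij, hiji, hijj, integral_colNormSq_sq_mul_colNormSq μ k hij,
    integral_colNormSq_sq_mul_colNormSq μ k hij.symm, Finset.card_pair hij]
  field_simp
  ring

theorem covariant_ls_variance_of_mem {i : Fin d} (hi : i ∈ T) :
    (d : ℝ) * ∫ U, ((T.card : ℝ)⁻¹ * ∑ l ∈ T, colNormSq k U l) *
        (((d : ℝ) + 1) * colNormSq k U i - 1 - 1 / (T.card : ℝ)) ^ 2 ∂μ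
      = 2 * (((T.card : ℝ) + 2) / T.card) * (((d : ℝ) + 1) / ((d : ℝ) + 2))
        - (1 + 1 / (T.card : ℝ)) ^ 2 := by
  have hd : (d : ℝ) ≠ 0 := by exact_mod_cast i.pos.ne'
  have ht : (T.card : ℝ) ≠ 0 := by exact_mod_cast (Finset.card_ne_zero_of_mem hi)
  have hexpand (U : unitaryGroup (Fin d) ℂ) :
      ((T.card : ℝ)⁻¹ * ∑ l ∈ T, colNormSq k U l) *
        (((d : ℝ) + 1) * colNormSq k U i - 1 - 1 / (T.card : ℝ)) ^ 2
      = (T.card : ℝ)⁻¹ *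
        (((d : ℝ) + 1) ^ 2 * ((∑ l ∈ T, colNormSq k U l) * colNormSq k U i ^ 2)
          - 2 * ((d : ℝ) + 1) * (1 + 1 / (T.card : ℝ))
            * ((∑ l ∈ T, colNormSq k U l) * colNormSq k U i)
          + (1 + 1 / (T.card : ℝ)) ^ 2 * ∑ l ∈ T, colNormSq k U l) := by
    ring
  simp only [hexpand]
  rw [integral_const_mul, integral_add, integral_sub, integral_const_mul, integral_const_mul,
    integral_const_mul, integral_sum_colNormSq_mul_sq μ k hi,
    integral_sum_colNormSq_mul_colNormSq μ k hi, integral_sum_colNormSq]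
  · field_simp
    ring
  all_goals exact Continuous.integrable_of_compactSpace μ (by fun_prop)

theorem covariant_ls_covariance_of_mem {i j : Fin d} (hij : i ≠ j) (hi : i ∈ T) (hj : j ∈ T) :
    (d : ℝ) * ∫ U, ((T.card : ℝ)⁻¹ * ∑ l ∈ T, colNormSq k U l) *
        ((((d : ℝ) + 1) * colNormSq k U i - 1 - 1 / (T.card : ℝ)) *
          (((d : ℝ) + 1) * colNormSq k U j - 1 - 1 / (T.card : ℝ))) ∂μ
      = (((T.card : ℝ) + 2) / T.card) * (((d : ℝ) + 1) / ((d : ℝ) + 2))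
        - (1 + 1 / (T.card : ℝ)) ^ 2 := by
  have hd : (d : ℝ) ≠ 0 := by exact_mod_cast i.pos.ne'
  have ht : (T.card : ℝ) ≠ 0 := by exact_mod_cast (Finset.card_ne_zero_of_mem hi)
  have hexpand (U : unitaryGroup (Fin d) ℂ) :
      ((T.card : ℝ)⁻¹ * ∑ l ∈ T, colNormSq k U l) *
        ((((d : ℝ) + 1) * colNormSq k U i - 1 - 1 / (T.card : ℝ)) *
          (((d : ℝ) + 1) * colNormSq k U j - 1 - 1 / (T.card : ℝ)))
      = (T.card : ℝ)⁻¹ *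
        (((d : ℝ) + 1) ^ 2
            * ((∑ l ∈ T, colNormSq k U l) * (colNormSq k U i * colNormSq k U j))
          - ((d : ℝ) + 1) * (1 + 1 / (T.card : ℝ))
            * ((∑ l ∈ T, colNormSq k U l) * colNormSq k U i)
          - ((d : ℝ) + 1) * (1 + 1 / (T.card : ℝ))
            * ((∑ l ∈ T, colNormSq k U l) * colNormSq k U j)
          + (1 + 1 / (T.card : ℝ)) ^ 2 * ∑ l ∈ T, colNormSq k U l) := by
    ring
  simp only [hexpand]
  rw [integral_const_mul, integral_add, integral_sub, integral_sub, integral_const_mul,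
    integral_const_mul, integral_const_mul, integral_const_mul,
    integral_sum_colNormSq_mul_mul μ k hij hi hj, integral_sum_colNormSq_mul_colNormSq μ k hi,
    integral_sum_colNormSq_mul_colNormSq μ k hj, integral_sum_colNormSq]
  · field_simp
    ring
  all_goals exact Continuous.integrable_of_compactSpace μ (by fun_prop)

end WeightedMoments

theorem re_star_mul_rhoR_mul_apply (r : ℕ) (A : Matrix (Fin d) (Fin d) ℂ) (k : Fin d) :
    ((star A * rhoR d r * A) k k).re
      = (r : ℝ)⁻¹ * ∑ l ∈ ({l | (l : ℕ) < r} : Finset (Fin d)), ‖A l k‖ ^ 2 := by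
  have hl (l : Fin d) :
      (star A * single l l (1 : ℂ) * A : Matrix (Fin d) (Fin d) ℂ) k k
        = (‖A l k‖ ^ 2 : ℝ) := by
    rw [Matrix.mul_assoc, mul_apply, Finset.sum_eq_single l] <;> simp +contextual [RCLike.conj_mul]
  simp only [rhoR, Matrix.mul_smul, Matrix.smul_mul, Matrix.mul_sum, Matrix.sum_mul,
    Matrix.smul_apply, Matrix.sum_apply, Finset.sum_ite, Finset.sum_const_zero, add_zero, hl]
  rw [smul_eq_mul, ← Complex.ofReal_sum, ← Complex.ofReal_natCast, ← Complex.ofReal_inv,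
    Complex.re_ofReal_mul, Complex.ofReal_re]

end

theorem covariant_ls_A_diagonal_variance_covariance_general
    (d r : ℕ) (hrd : r ≤ d)
    (μ : Measure (Matrix.unitaryGroup (Fin d) ℂ)) [IsProbabilityMeasure μ]
    (hμ : ∀ V : Matrix.unitaryGroup (Fin d) ℂ, μ.map (fun U => V * U) = μ)
    (k : Fin d) :
    (∀ i : Fin d, (i : ℕ) < r →
      (d : ℝ) * ∫ U,
          ((star (U : Matrix (Fin d) (Fin d) ℂ) * rhoR d r * (U : Matrix (Fin d) (Fin d) ℂ)) k k).re *
          (((d : ℝ) + 1) * ‖(U : Matrix (Fin d) (Fin d) ℂ) i k‖ ^ 2 - 1 - 1 / (r : ℝ)) ^ 2 ∂μ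
        = 2 * (((r : ℝ) + 2) / (r : ℝ)) * (((d : ℝ) + 1) / ((d : ℝ) + 2)) - (1 + 1 / (r : ℝ)) ^ 2) ∧
    (2 ≤ r → ∀ i j : Fin d, i ≠ j → (i : ℕ) < r → (j : ℕ) < r →
      (d : ℝ) * ∫ U,
          ((star (U : Matrix (Fin d) (Fin d) ℂ) * rhoR d r * (U : Matrix (Fin d) (Fin d) ℂ)) k k).re *
          ((((d : ℝ) + 1) * ‖(U : Matrix (Fin d) (Fin d) ℂ) i k‖ ^ 2 - 1 - 1 / (r : ℝ)) *
            (((d : ℝ) + 1) * ‖(U : Matrix (Fin d) (Fin d) ℂ) j k‖ ^ 2 - 1 - 1 / (r : ℝ))) ∂μ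
        = (((r : ℝ) + 2) / (r : ℝ)) * (((d : ℝ) + 1) / ((d : ℝ) + 2)) - (1 + 1 / (r : ℝ)) ^ 2) := by
  have : μ.IsMulLeftInvariant := ⟨hμ⟩
  set T : Finset (Fin d) := {l | (l : ℕ) < r}
  have hcard : T.card = r := by simp [T, Fin.card_filter_val_lt, hrd]
  have hT (i : Fin d) (hi : (i : ℕ) < r) : i ∈ T := by simpa [T] using hi
  simp only [re_star_mul_rhoR_mul_apply]
  refine ⟨fun i hi => ?_, fun _ i j hij hi hj => ?_⟩
  · have h := covariant_ls_variance_of_mem μ k (hT i hi)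
    rwa [hcard] at h
  · have h := covariant_ls_covariance_of_mem μ k hij (hT i hi) (hT j hj)
    rwa [hcard] at h

/-- Diagonal variance and covariance of the `A` block of the
covariant-measurement LS estimator for `ρ_r`: for `1 ≤ i ≤ r`,
`d·∫ ⟨e_k, U*ρ_r U e_k⟩·((d+1)|U_{ik}|² − 1 − 1/r)² dU = 2((r+2)/r)((d+1)/(d+2)) − (1+1/r)²`,
and for distinct `1 ≤ i, j ≤ r` (when `r ≥ 2`),
`d·∫ ⟨e_k, U*ρ_r U e_k⟩·((d+1)|U_{ik}|² − 1 − 1/r)((d+1)|U_{jk}|² − 1 − 1/r) dU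
  = ((r+2)/r)((d+1)/(d+2)) − (1+1/r)²`. -/
theorem covariant_ls_A_diagonal_variance_covariance
    (d r : ℕ) (hd : 2 ≤ d) (hr : 1 ≤ r) (hrd : r ≤ d)
    (μ : Measure (Matrix.unitaryGroup (Fin d) ℂ)) [IsProbabilityMeasure μ]
    (hμ : ∀ V : Matrix.unitaryGroup (Fin d) ℂ, μ.map (fun U => V * U) = μ)
    (k : Fin d) :
    (∀ i : Fin d, (i : ℕ) < r →
      (d : ℝ) * ∫ U,
          ((star (U : Matrix (Fin d) (Fin d) ℂ) * rhoR d r * (U : Matrix (Fin d) (Fin d) ℂ)) k k).re *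
          (((d : ℝ) + 1) * ‖(U : Matrix (Fin d) (Fin d) ℂ) i k‖ ^ 2 - 1 - 1 / (r : ℝ)) ^ 2 ∂μ
        = 2 * (((r : ℝ) + 2) / (r : ℝ)) * (((d : ℝ) + 1) / ((d : ℝ) + 2)) - (1 + 1 / (r : ℝ)) ^ 2) ∧
    (2 ≤ r → ∀ i j : Fin d, i ≠ j → (i : ℕ) < r → (j : ℕ) < r →
      (d : ℝ) * ∫ U,
          ((star (U : Matrix (Fin d) (Fin d) ℂ) * rhoR d r * (U : Matrix (Fin d) (Fin d) ℂ)) k k).re *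
          ((((d : ℝ) + 1) * ‖(U : Matrix (Fin d) (Fin d) ℂ) i k‖ ^ 2 - 1 - 1 / (r : ℝ)) *
            (((d : ℝ) + 1) * ‖(U : Matrix (Fin d) (Fin d) ℂ) j k‖ ^ 2 - 1 - 1 / (r : ℝ))) ∂μ
        = (((r : ℝ) + 2) / (r : ℝ)) * (((d : ℝ) + 1) / ((d : ℝ) + 2)) - (1 + 1 / (r : ℝ)) ^ 2) :=
  covariant_ls_A_diagonal_variance_covariance_general d r hrd μ hμ k
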